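/- There is no [[5,1,3]] permutation-invariant quantum code whose logical codewords have nonnegative coefficients in the Dicke basis. That is, there is no orthogonal projection P on (ℂ²)^{⊗5} of rank 2 satisfying πP = P = Pπ for all qubit-permutation operators π, such that PEP = g_E P for some g_E ∈ ℂ for every Pauli E ∈ G_5 of weight at most 2, and such that P = |L_1⟩⟨L_1| + |L_2⟩⟨L_2| for orthonormal vectors |L_j⟩ = Σ_{w=0}^{5} a_{j,w}|D^5_w⟩ with all a_{j,w} nonnegative real. -/

import Mathlib

open Matrix BigOperators

/-- The single-qubit Pauli matrices `I, X, Y, Z`, indexed by `Fin 4`. -/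
noncomputable def pauli1 (k : Fin 4) : Matrix (Fin 2) (Fin 2) ℂ :=
  if k = 0 then 1
  else if k = 1 then !![0, 1; 1, 0]
  else if k = 2 then !![0, -Complex.I; Complex.I, 0]
  else !![1, 0; 0, -1]

/-- The `n`-qubit Pauli operator labelled by `p : Fin n → Fin 4`, i.e. the tensor product
`pauli1 (p 0) ⊗ ⋯ ⊗ pauli1 (p (n-1))`, acting on `(ℂ²)^{⊗n} ≅ ℂ^{2^n}` (whose standard
basis is indexed by `Fin n → Fin 2`).  The map `p ↦ PauliOp n p` enumerates `G_n`. -/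
noncomputable def PauliOp (n : ℕ) (p : Fin n → Fin 4) :
    Matrix (Fin n → Fin 2) (Fin n → Fin 2) ℂ :=
  fun v w => ∏ i, pauli1 (p i) (v i) (w i)

/-- The weight of a Pauli label: the number of non-identity tensor factors. -/
def pwt {n : ℕ} (p : Fin n → Fin 4) : ℕ :=
  (Finset.univ.filter fun i => p i ≠ 0).card

/-- The unitary qubit-permutation operator associated with `π ∈ S_n`, acting on
`(ℂ²)^{⊗n}` by permuting the tensor factors. -/
noncomputable def permMat (n : ℕ) (π : Equiv.Perm (Fin n)) :
    Matrix (Fin n → Fin 2) (Fin n → Fin 2) ℂ :=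
  fun v w => if w = v ∘ π then 1 else 0

/-- The Dicke state `|D^n_w⟩ = C(n,w)^{-1/2} Σ_{wt(x)=w} |x⟩`, as a vector on
`(ℂ²)^{⊗n}`. -/
noncomputable def dicke (n w : ℕ) : (Fin n → Fin 2) → ℂ :=
  fun v => if (Finset.univ.filter fun i => v i = 1).card = w
    then ((Real.sqrt (n.choose w) : ℂ))⁻¹ else 0

/-! ### Auxiliary definitions and lemmas -/

/-- The real-valued Dicke vector on 5 qubits. -/
noncomputable def dr (u : ℕ) : (Fin 5 → Fin 2) → ℝ :=
  fun v => if (Finset.univ.filter fun i => v i = 1).card = u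
    then (Real.sqrt ((5).choose u))⁻¹ else 0

lemma dicke_eq (u : ℕ) (v : Fin 5 → Fin 2) : dicke 5 u v = ((dr u v : ℝ) : ℂ) := by
  simp only [dicke, dr, apply_ite (fun x : ℝ => (x : ℂ)), Complex.ofReal_inv, Complex.ofReal_zero]

lemma dr_nonneg (u : ℕ) (v : Fin 5 → Fin 2) : 0 ≤ dr u v := by
  unfold dr; split <;> positivity

lemma dr_pos (u : ℕ) (hu : u ≤ 5) (v : Fin 5 → Fin 2)
    (hv : (Finset.univ.filter fun i => v i = 1).card = u) : 0 < dr u v := by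
  unfold dr
  rw [if_pos hv]
  have h1 : 0 < (5).choose u := Nat.choose_pos hu
  have h2 : (0:ℝ) < Real.sqrt ((5).choose u) := Real.sqrt_pos.mpr (by positivity)
  positivity

lemma rsq_pos (u : ℕ) (hu : u ≤ 5) : 0 < ((Real.sqrt ((5).choose u))⁻¹)^2 := by
  have h1 : 0 < (5).choose u := Nat.choose_pos hu
  have h2 : (0:ℝ) < Real.sqrt ((5).choose u) := Real.sqrt_pos.mpr (by positivity)
  positivity

/-- The real single-qubit Pauli matrices (the `Y` slot is unused). -/
def pr (k : Fin 4) : Matrix (Fin 2) (Fin 2) ℝ :=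
  if k = 0 then 1 else if k = 1 then !![0, 1; 1, 0] else if k = 2 then 0 else !![1, 0; 0, -1]

/-- The real `5`-qubit Pauli operators. -/
def PauliR (p : Fin 5 → Fin 4) : Matrix (Fin 5 → Fin 2) (Fin 5 → Fin 2) ℝ :=
  fun x y => ∏ i, pr (p i) (x i) (y i)

lemma pauli1_eq (k : Fin 4) (hk : k ≠ 2) (a b : Fin 2) :
    pauli1 k a b = ((pr k a b : ℝ) : ℂ) := by
  fin_cases k
  · fin_cases a <;> fin_cases b <;> simp [pauli1, pr, Matrix.one_apply]
  · fin_cases a <;> fin_cases b <;> simp [pauli1, pr]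
  · exact absurd rfl hk
  · fin_cases a <;> fin_cases b <;> simp [pauli1, pr]

lemma PauliOp_eq (p : Fin 5 → Fin 4) (hp : ∀ i, p i ≠ 2) (x y : Fin 5 → Fin 2) :
    PauliOp 5 p x y = ((PauliR p x y : ℝ) : ℂ) := by
  unfold PauliOp PauliR
  rw [Complex.ofReal_prod]
  exact Finset.prod_congr rfl fun i _ => pauli1_eq _ (hp i) _ _

lemma pr_nonneg (k : Fin 4) (hk : k = 0 ∨ k = 1) (a b : Fin 2) : 0 ≤ pr k a b := by
  rcases hk with h | h <;> subst h <;> fin_cases a <;> fin_cases b <;>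
    simp [pr, Matrix.one_apply]

lemma PauliR_nonneg (p : Fin 5 → Fin 4) (hp : ∀ i, p i = 0 ∨ p i = 1) (x y : Fin 5 → Fin 2) :
    0 ≤ PauliR p x y :=
  Finset.prod_nonneg fun i _ => pr_nonneg _ (hp i) _ _

lemma pr_offdiag (k : Fin 4) (hk : k = 0 ∨ k = 3) (a b : Fin 2) (h : a ≠ b) : pr k a b = 0 := by
  rcases hk with h' | h' <;> subst h' <;> fin_cases a <;> fin_cases b <;>
    simp_all [pr, Matrix.one_apply]

lemma PauliR_Z_offdiag (x y : Fin 5 → Fin 2) (h : x ≠ y) :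
    PauliR ![3,0,0,0,0] x y = 0 := by
  obtain ⟨i, hi⟩ := Function.ne_iff.mp h
  refine Finset.prod_eq_zero (Finset.mem_univ i) ?_
  refine pr_offdiag _ ?_ _ _ hi
  fin_cases i <;> simp

lemma PauliR_Z_diag (x : Fin 5 → Fin 2) :
    PauliR ![3,0,0,0,0] x x = if x 0 = 0 then 1 else -1 := by
  unfold PauliR
  rw [Fin.prod_univ_five]
  have h0 : ∀ a : Fin 2, pr 3 a a = if a = 0 then 1 else -1 := by
    intro a; fin_cases a <;> simp [pr]
  have h1 : ∀ a : Fin 2, pr 0 a a = 1 := by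
    intro a; simp [pr, Matrix.one_apply]
  simp [h0, h1]

lemma sandwich {V : Type*} [Fintype V] [DecidableEq V]
    (P E : Matrix V V ℂ) (L : Fin 2 → V → ℂ)
    (horth : ∀ j k, (∑ v, star (L j v) * L k v) = if j = k then (1:ℂ) else 0)
    (hP : P = fun v w => ∑ j, L j v * star (L j w))
    (g : ℂ) (hE : P * E * P = g • P) (j k : Fin 2) :
    (∑ x, ∑ y, star (L j x) * (E x y * L k y)) = g * (if j = k then 1 else 0) := by
  have key1 : ∀ x, (∑ v, star (L j v) * P v x) = star (L j x) := by
    intro x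
    rw [hP]
    simp only
    simp_rw [Finset.mul_sum, ← mul_assoc]
    rw [Finset.sum_comm]
    simp_rw [← Finset.sum_mul, horth]
    simp
  have key2 : ∀ y, (∑ w, P y w * L k w) = L k y := by
    intro y
    rw [hP]
    simp only
    simp_rw [Finset.sum_mul, mul_assoc]
    rw [Finset.sum_comm]
    simp_rw [← Finset.mul_sum, horth]
    simp
  have way1 : (∑ v, ∑ w, star (L j v) * ((P * E * P) v w * L k w))
      = g * (if j = k then 1 else 0) := by
    simp_rw [hE, Matrix.smul_apply, smul_eq_mul]
    calc (∑ v, ∑ w, star (L j v) * (g * P v w * L k w))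
        = g * ∑ v, star (L j v) * (∑ w, P v w * L k w) := by
          rw [Finset.mul_sum]; congr 1; ext v; rw [Finset.mul_sum, Finset.mul_sum]
          congr 1; ext w; ring
      _ = g * ∑ v, star (L j v) * L k v := by simp_rw [key2]
      _ = g * (if j = k then 1 else 0) := by rw [horth]
  have step1 : ∀ v, (∑ w, (P * E * P) v w * L k w) = ∑ y, (P * E) v y * L k y := by
    intro v
    simp_rw [Matrix.mul_apply (M := P * E) (N := P), Finset.sum_mul]
    rw [Finset.sum_comm]
    simp_rw [mul_assoc, ← Finset.mul_sum, key2]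
  have step2 : ∀ y, (∑ v, star (L j v) * (P * E) v y) = ∑ x, star (L j x) * E x y := by
    intro y
    simp_rw [Matrix.mul_apply (M := P) (N := E), Finset.mul_sum]
    rw [Finset.sum_comm]
    simp_rw [← mul_assoc, ← Finset.sum_mul, key1]
  calc (∑ x, ∑ y, star (L j x) * (E x y * L k y))
      = ∑ y, (∑ x, star (L j x) * E x y) * L k y := by
        rw [Finset.sum_comm]; congr 1; ext y; rw [Finset.sum_mul]
        congr 1; ext x; ring
    _ = ∑ y, (∑ v, star (L j v) * (P * E) v y) * L k y := by simp_rw [step2]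
    _ = ∑ v, star (L j v) * (∑ y, (P * E) v y * L k y) := by
        simp_rw [Finset.sum_mul]
        rw [Finset.sum_comm]
        simp_rw [mul_assoc, ← Finset.mul_sum]
    _ = ∑ v, star (L j v) * (∑ w, (P * E * P) v w * L k w) := by simp_rw [step1]
    _ = ∑ v, ∑ w, star (L j v) * ((P * E * P) v w * L k w) := by simp_rw [Finset.mul_sum]
    _ = g * (if j = k then 1 else 0) := way1

lemma expand (E : Matrix (Fin 5 → Fin 2) (Fin 5 → Fin 2) ℝ) (b c : Fin 6 → ℝ) :
    (∑ x, ∑ y, (∑ u : Fin 6, b u * dr (u : ℕ) x) * (E x y * (∑ u' : Fin 6, c u' * dr (u' : ℕ) y)))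
    = ∑ u : Fin 6, ∑ u' : Fin 6, b u * c u' * (∑ x, ∑ y, dr (u : ℕ) x * (E x y * dr (u' : ℕ) y)) := by
  calc (∑ x, ∑ y, (∑ u : Fin 6, b u * dr (u : ℕ) x) * (E x y * (∑ u' : Fin 6, c u' * dr (u' : ℕ) y)))
      = ∑ x, ∑ y, ∑ q : Fin 6 × Fin 6, b q.1 * c q.2 * (dr (q.1 : ℕ) x * (E x y * dr (q.2 : ℕ) y)) := by
        refine Finset.sum_congr rfl fun x _ => Finset.sum_congr rfl fun y _ => ?_
        rw [Fintype.sum_prod_type]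
        simp only [Finset.mul_sum, Finset.sum_mul]
        rw [Finset.sum_comm]
        exact Finset.sum_congr rfl fun u _ => Finset.sum_congr rfl fun u' _ => by ring
    _ = ∑ q : Fin 6 × Fin 6, ∑ x, ∑ y, b q.1 * c q.2 * (dr (q.1 : ℕ) x * (E x y * dr (q.2 : ℕ) y)) := by
        conv_lhs => enter [2]; ext x; rw [Finset.sum_comm]
        rw [Finset.sum_comm]
    _ = ∑ u : Fin 6, ∑ u' : Fin 6, b u * c u' * (∑ x, ∑ y, dr (u : ℕ) x * (E x y * dr (u' : ℕ) y)) := by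
        rw [Fintype.sum_prod_type]
        refine Finset.sum_congr rfl fun u _ => Finset.sum_congr rfl fun u' _ => ?_
        simp_rw [← Finset.mul_sum]

lemma T_nonneg (E : Matrix (Fin 5 → Fin 2) (Fin 5 → Fin 2) ℝ) (hE : ∀ x y, 0 ≤ E x y)
    (u u' : ℕ) : 0 ≤ ∑ x, ∑ y, dr u x * (E x y * dr u' y) :=
  Finset.sum_nonneg fun x _ => Finset.sum_nonneg fun y _ =>
    mul_nonneg (dr_nonneg _ _) (mul_nonneg (hE x y) (dr_nonneg _ _))

lemma T_pos (E : Matrix (Fin 5 → Fin 2) (Fin 5 → Fin 2) ℝ) (hE : ∀ x y, 0 ≤ E x y)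
    (u u' : ℕ) (hu : u ≤ 5) (hu' : u' ≤ 5) (x₀ y₀ : Fin 5 → Fin 2)
    (hx : (Finset.univ.filter fun i => x₀ i = 1).card = u)
    (hy : (Finset.univ.filter fun i => y₀ i = 1).card = u')
    (hExy : 0 < E x₀ y₀) :
    0 < ∑ x, ∑ y, dr u x * (E x y * dr u' y) := by
  have hterm : 0 < dr u x₀ * (E x₀ y₀ * dr u' y₀) :=
    mul_pos (dr_pos u hu x₀ hx) (mul_pos hExy (dr_pos u' hu' y₀ hy))
  refine Finset.sum_pos' (fun x _ => Finset.sum_nonneg fun y _ =>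
    mul_nonneg (dr_nonneg _ _) (mul_nonneg (hE x y) (dr_nonneg _ _))) ⟨x₀, Finset.mem_univ _, ?_⟩
  exact Finset.sum_pos' (fun y _ =>
    mul_nonneg (dr_nonneg _ _) (mul_nonneg (hE x₀ y) (dr_nonneg _ _))) ⟨y₀, Finset.mem_univ _, hterm⟩

lemma tz_cross (u u' : ℕ) (h : u ≠ u') :
    (∑ x, ∑ y, dr u x * (PauliR ![3,0,0,0,0] x y * dr u' y)) = 0 := by
  refine Finset.sum_eq_zero fun x _ => Finset.sum_eq_zero fun y _ => ?_
  by_cases hxy : x = y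
  · subst hxy
    unfold dr
    by_cases hw : (Finset.univ.filter fun i => x i = 1).card = u
    · by_cases hw' : (Finset.univ.filter fun i => x i = 1).card = u'
      · exact absurd (hw.symm.trans hw') h
      · rw [if_neg hw']; ring
    · rw [if_neg hw]; ring
  · rw [PauliR_Z_offdiag x y hxy]; ring

lemma tz_diag (u : ℕ) :
    (∑ x, ∑ y, dr u x * (PauliR ![3,0,0,0,0] x y * dr u y))
    = ((Real.sqrt ((5).choose u))⁻¹)^2 *
      (((Finset.univ.filter fun x : Fin 5 → Fin 2 =>
          (Finset.univ.filter fun i => x i = 1).card = u ∧ x 0 = 0).card : ℝ)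
       - ((Finset.univ.filter fun x : Fin 5 → Fin 2 =>
          (Finset.univ.filter fun i => x i = 1).card = u ∧ x 0 = 1).card : ℝ)) := by
  have hx : ∀ x : Fin 5 → Fin 2, (∑ y, dr u x * (PauliR ![3,0,0,0,0] x y * dr u y))
      = dr u x * ((if x 0 = 0 then 1 else -1) * dr u x) := by
    intro x
    rw [Finset.sum_eq_single x]
    · rw [PauliR_Z_diag]
    · intro y _ hyx
      rw [PauliR_Z_offdiag x y (Ne.symm hyx)]; ring
    · intro hx; exact absurd (Finset.mem_univ x) hx
  simp_rw [hx]
  have hterm : ∀ x : Fin 5 → Fin 2, dr u x * ((if x 0 = 0 then 1 else -1) * dr u x)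
      = ((Real.sqrt ((5).choose u))⁻¹)^2 *
        ((if (Finset.univ.filter fun i => x i = 1).card = u ∧ x 0 = 0 then (1:ℝ) else 0)
         - (if (Finset.univ.filter fun i => x i = 1).card = u ∧ x 0 = 1 then (1:ℝ) else 0)) := by
    intro x
    unfold dr
    by_cases hw : (Finset.univ.filter fun i => x i = 1).card = u
    · by_cases h0 : x 0 = 0
      · have h1 : ¬ (x 0 = 1) := by rw [h0]; decide
        simp only [hw, h0, h1, if_pos, if_true, and_true, true_and, and_false, if_false]
        norm_num [Fin.ext_iff, sq]
        try ring
      · have h1 : x 0 = 1 := Fin.eq_one_of_ne_zero _ h0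
        simp only [hw, h0, h1, if_true, and_true, true_and, and_false, if_false, if_neg h0]
        norm_num [Fin.ext_iff, sq]
        try ring
    · simp only [hw, if_neg hw, false_and, if_false]
      norm_num
  simp_rw [hterm]
  rw [← Finset.mul_sum, Finset.sum_sub_distrib, Finset.sum_boole, Finset.sum_boole]

lemma tz_sign (u : ℕ) (hu : u ≤ 5) (c0 c1 : ℕ)
    (h0 : (Finset.univ.filter fun x : Fin 5 → Fin 2 =>
        (Finset.univ.filter fun i => x i = 1).card = u ∧ x 0 = 0).card = c0)
    (h1 : (Finset.univ.filter fun x : Fin 5 → Fin 2 =>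
        (Finset.univ.filter fun i => x i = 1).card = u ∧ x 0 = 1).card = c1) :
    (c1 < c0 → 0 < ∑ x, ∑ y, dr u x * (PauliR ![3,0,0,0,0] x y * dr u y)) ∧
    (c0 < c1 → (∑ x, ∑ y, dr u x * (PauliR ![3,0,0,0,0] x y * dr u y)) < 0) := by
  rw [tz_diag, h0, h1]
  constructor
  · intro h
    have hlt : (0:ℝ) < (c0:ℝ) - (c1:ℝ) := by
      have : (c1:ℝ) < (c0:ℝ) := by exact_mod_cast h
      linarith
    exact mul_pos (rsq_pos u hu) hlt
  · intro h
    have hlt : (c0:ℝ) - (c1:ℝ) < 0 := by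
      have : (c0:ℝ) < (c1:ℝ) := by exact_mod_cast h
      linarith
    exact mul_neg_of_pos_of_neg (rsq_pos u hu) hlt

lemma endgame1 (A B : Fin 6 → ℝ) (t : Fin 6 → ℝ)
    (hprod : ∀ u u' : Fin 6, (u:ℕ) ≤ (u':ℕ)+2 → (u':ℕ) ≤ (u:ℕ)+2 → A u * B u' = 0)
    (ht : ∀ u : Fin 6, ((u:ℕ) ≤ 2 → 0 < t u) ∧ (3 ≤ (u:ℕ) → t u < 0))
    (hZ : ∑ u, (A u)^2 * t u = ∑ u, (B u)^2 * t u)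
    (u₀ u₁ : Fin 6) (hu₀ : A u₀ ≠ 0) (hu₁ : B u₁ ≠ 0)
    (hsep : (u₁:ℕ) + 3 ≤ (u₀:ℕ)) : False := by
  have h₀lt : (u₀:ℕ) < 6 := u₀.isLt
  have h₁lt : (u₁:ℕ) < 6 := u₁.isLt
  have hu₀3 : 3 ≤ (u₀:ℕ) := by omega
  have hu₁2 : (u₁:ℕ) ≤ 2 := by omega
  have hAlow : ∀ u : Fin 6, (u:ℕ) ≤ 2 → A u = 0 := by
    intro u hu
    have := hprod u u₁ (by omega) (by omega)
    rcases mul_eq_zero.mp this with h | h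
    · exact h
    · exact absurd h hu₁
  have hBhigh : ∀ u : Fin 6, 3 ≤ (u:ℕ) → B u = 0 := by
    intro u hu
    have hlt : (u:ℕ) < 6 := u.isLt
    have := hprod u₀ u (by omega) (by omega)
    rcases mul_eq_zero.mp this with h | h
    · exact absurd h hu₀
    · exact h
  have hL : (∑ u, (A u)^2 * t u) < 0 := by
    have h := Finset.sum_lt_sum (f := fun u : Fin 6 => (A u)^2 * t u)
      (g := fun _ => (0:ℝ)) ?_ ⟨u₀, Finset.mem_univ _, ?_⟩
    · simpa using h
    · intro i _
      by_cases hi : (i:ℕ) ≤ 2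
      · simp [hAlow i hi]
      · exact mul_nonpos_of_nonneg_of_nonpos (sq_nonneg _) (le_of_lt ((ht i).2 (by omega)))
    · have hpos : 0 < (A u₀)^2 := lt_of_le_of_ne (sq_nonneg _) (Ne.symm (pow_ne_zero 2 hu₀))
      exact mul_neg_of_pos_of_neg hpos ((ht u₀).2 hu₀3)
  have hR : 0 < (∑ u, (B u)^2 * t u) := by
    have h := Finset.sum_lt_sum (f := fun _ : Fin 6 => (0:ℝ))
      (g := fun u : Fin 6 => (B u)^2 * t u) ?_ ⟨u₁, Finset.mem_univ _, ?_⟩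
    · simpa using h
    · intro i _
      by_cases hi : (i:ℕ) ≤ 2
      · exact mul_nonneg (sq_nonneg _) (le_of_lt ((ht i).1 hi))
      · simp [hBhigh i (by omega)]
    · have hpos : 0 < (B u₁)^2 := lt_of_le_of_ne (sq_nonneg _) (Ne.symm (pow_ne_zero 2 hu₁))
      exact mul_pos hpos ((ht u₁).1 hu₁2)
  linarith [hZ]
/-- There is no `[[5,1,3]]` permutation-invariant quantum code whose
logical codewords have nonnegative coefficients in the Dicke basis: no rank-2 orthogonal
projection `P` on `(ℂ²)^{⊗5}` that commutes with all qubit permutations, satisfies the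
Knill–Laflamme conditions `P E P = g_E • P` for every Pauli `E` of weight `≤ 2`, and
equals `|L₁⟩⟨L₁| + |L₂⟩⟨L₂|` for orthonormal `|L_j⟩ = Σ_w a_{j,w}|D^5_w⟩` with all
`a_{j,w}` nonnegative real. -/
theorem stmt18 :
    ¬ ∃ (P : Matrix (Fin 5 → Fin 2) (Fin 5 → Fin 2) ℂ)
        (L : Fin 2 → (Fin 5 → Fin 2) → ℂ) (a : Fin 2 → Fin 6 → ℝ),
      P * P = P ∧ Pᴴ = P ∧ P.rank = 2 ∧
      (∀ π : Equiv.Perm (Fin 5), permMat 5 π * P = P ∧ P * permMat 5 π = P) ∧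
      (∀ p : Fin 5 → Fin 4, pwt p ≤ 2 → ∃ g : ℂ, P * PauliOp 5 p * P = g • P) ∧
      (∀ j w, 0 ≤ a j w) ∧
      (∀ j, L j = fun v => ∑ w : Fin 6, (a j w : ℂ) * dicke 5 (w : ℕ) v) ∧
      (∀ j k, (∑ v, star (L j v) * L k v) = if j = k then (1 : ℂ) else 0) ∧
      P = fun v w => ∑ j, L j v * star (L j w) := by
  rintro ⟨P, L, a, -, -, -, -, hKL, ha, hL, horth, hgram⟩
  -- the logical vectors are real, with real coefficient vector in the Dicke basis
  have hLr : ∀ j v, L j v = (((∑ u : Fin 6, a j u * dr (u:ℕ) v) : ℝ) : ℂ) := by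
    intro j v
    rw [hL]
    push_cast
    exact Finset.sum_congr rfl fun u _ => by rw [dicke_eq]
  have hstar : ∀ j v, star (L j v) = L j v := by
    intro j v
    rw [hLr]
    exact Complex.conj_ofReal _
  -- scalar Knill-Laflamme conditions, in real form
  have hW : ∀ (p : Fin 5 → Fin 4), (∀ i, p i ≠ 2) →
      ∀ g : ℂ, P * PauliOp 5 p * P = g • P → ∀ j k : Fin 2,
      (((∑ x, ∑ y, (∑ u : Fin 6, a j u * dr (u:ℕ) x) *
          (PauliR p x y * (∑ u' : Fin 6, a k u' * dr (u':ℕ) y))) : ℝ) : ℂ)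
        = g * (if j = k then 1 else 0) := by
    intro p hp g hg j k
    rw [← sandwich P (PauliOp 5 p) L horth hgram g hg j k]
    push_cast
    refine Finset.sum_congr rfl fun x _ => Finset.sum_congr rfl fun y _ => ?_
    rw [hstar, hLr j x, hLr k y, PauliOp_eq p hp x y]
    push_cast
    ring
  -- real orthonormality
  have horthR : ∀ j k : Fin 2, (∑ v, (∑ u : Fin 6, a j u * dr (u:ℕ) v) *
      (∑ u : Fin 6, a k u * dr (u:ℕ) v)) = if j = k then (1:ℝ) else 0 := by
    intro j k
    have h := horth j k
    have hc : (((∑ v, (∑ u : Fin 6, a j u * dr (u:ℕ) v) *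
        (∑ u : Fin 6, a k u * dr (u:ℕ) v)) : ℝ) : ℂ) = ∑ v, star (L j v) * L k v := by
      push_cast
      refine Finset.sum_congr rfl fun v _ => ?_
      rw [hstar, hLr j v, hLr k v]
      push_cast
      ring
    rw [← hc] at h
    by_cases hjk : j = k
    · rw [if_pos hjk] at h ⊢; exact_mod_cast h
    · rw [if_neg hjk] at h ⊢; exact_mod_cast h
  -- identity-matrix double sums collapse
  have hid : ∀ f g : (Fin 5 → Fin 2) → ℝ,
      (∑ x, ∑ y, f x * ((1 : Matrix (Fin 5 → Fin 2) (Fin 5 → Fin 2) ℝ) x y * g y))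
        = ∑ x, f x * g x := by
    intro f g
    refine Finset.sum_congr rfl fun x _ => ?_
    rw [Finset.sum_eq_single x]
    · rw [Matrix.one_apply_eq]; ring
    · intro y _ hyx; rw [Matrix.one_apply_ne (Ne.symm hyx)]; ring
    · intro h; exact absurd (Finset.mem_univ x) h
  -- nonnegativity of the relevant real Pauli operators
  have hEInn : ∀ x y, (0:ℝ) ≤ (1 : Matrix (Fin 5 → Fin 2) (Fin 5 → Fin 2) ℝ) x y := by
    intro x y; rw [Matrix.one_apply]; split <;> norm_num
  have hEXnn : ∀ x y, 0 ≤ PauliR ![1,0,0,0,0] x y :=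
    PauliR_nonneg _ (by decide)
  have hEXXnn : ∀ x y, 0 ≤ PauliR ![1,1,0,0,0] x y :=
    PauliR_nonneg _ (by decide)
  -- the three vanishing bilinear sums
  have hsumI : (∑ u : Fin 6, ∑ u' : Fin 6, a 0 u * a 1 u' *
      (∑ x, ∑ y, dr (u:ℕ) x * ((1 : Matrix (Fin 5 → Fin 2) (Fin 5 → Fin 2) ℝ) x y * dr (u':ℕ) y))) = 0 := by
    rw [← expand, hid]
    have h := horthR 0 1
    rw [if_neg (by decide : ¬(0:Fin 2) = 1)] at h
    exact h
  obtain ⟨gX, hgX⟩ := hKL ![1,0,0,0,0] (by decide)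
  have hsumX : (∑ u : Fin 6, ∑ u' : Fin 6, a 0 u * a 1 u' *
      (∑ x, ∑ y, dr (u:ℕ) x * (PauliR ![1,0,0,0,0] x y * dr (u':ℕ) y))) = 0 := by
    rw [← expand]
    have h := hW ![1,0,0,0,0] (by decide) gX hgX 0 1
    rw [if_neg (by decide : ¬(0:Fin 2) = 1), mul_zero] at h
    exact_mod_cast h
  obtain ⟨gXX, hgXX⟩ := hKL ![1,1,0,0,0] (by decide)
  have hsumXX : (∑ u : Fin 6, ∑ u' : Fin 6, a 0 u * a 1 u' *
      (∑ x, ∑ y, dr (u:ℕ) x * (PauliR ![1,1,0,0,0] x y * dr (u':ℕ) y))) = 0 := by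
    rw [← expand]
    have h := hW ![1,1,0,0,0] (by decide) gXX hgXX 0 1
    rw [if_neg (by decide : ¬(0:Fin 2) = 1), mul_zero] at h
    exact_mod_cast h
  -- the Z-diagonal equality
  obtain ⟨gZ, hgZ⟩ := hKL ![3,0,0,0,0] (by decide)
  have hZR : (∑ u : Fin 6, ∑ u' : Fin 6, a 0 u * a 0 u' *
      (∑ x, ∑ y, dr (u:ℕ) x * (PauliR ![3,0,0,0,0] x y * dr (u':ℕ) y)))
      = (∑ u : Fin 6, ∑ u' : Fin 6, a 1 u * a 1 u' *
      (∑ x, ∑ y, dr (u:ℕ) x * (PauliR ![3,0,0,0,0] x y * dr (u':ℕ) y))) := by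
    rw [← expand, ← expand]
    have h0 := hW ![3,0,0,0,0] (by decide) gZ hgZ 0 0
    have h1 := hW ![3,0,0,0,0] (by decide) gZ hgZ 1 1
    rw [if_pos rfl, mul_one] at h0 h1
    exact_mod_cast h0.trans h1.symm
  have hdiag : ∀ j : Fin 2, (∑ u : Fin 6, ∑ u' : Fin 6, a j u * a j u' *
      (∑ x, ∑ y, dr (u:ℕ) x * (PauliR ![3,0,0,0,0] x y * dr (u':ℕ) y)))
      = ∑ u : Fin 6, (a j u)^2 *
      (∑ x, ∑ y, dr (u:ℕ) x * (PauliR ![3,0,0,0,0] x y * dr (u:ℕ) y)) := by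
    intro j
    refine Finset.sum_congr rfl fun u _ => ?_
    rw [Finset.sum_eq_single u]
    · ring
    · intro u' _ hne
      rw [tz_cross (u:ℕ) (u':ℕ) (fun hc => hne (Fin.val_injective hc).symm)]
      ring
    · intro h; exact absurd (Finset.mem_univ u) h
  have hZsum : (∑ u : Fin 6, (a 0 u)^2 *
      (∑ x, ∑ y, dr (u:ℕ) x * (PauliR ![3,0,0,0,0] x y * dr (u:ℕ) y)))
      = ∑ u : Fin 6, (a 1 u)^2 *
      (∑ x, ∑ y, dr (u:ℕ) x * (PauliR ![3,0,0,0,0] x y * dr (u:ℕ) y)) := by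
    rw [← hdiag 0, ← hdiag 1]; exact hZR
  -- signs of the Z-diagonal coefficients
  have htz : ∀ u : Fin 6, ((u:ℕ) ≤ 2 → 0 < ∑ x, ∑ y,
      dr (u:ℕ) x * (PauliR ![3,0,0,0,0] x y * dr (u:ℕ) y)) ∧
      (3 ≤ (u:ℕ) → (∑ x, ∑ y, dr (u:ℕ) x * (PauliR ![3,0,0,0,0] x y * dr (u:ℕ) y)) < 0) := by
    intro u
    fin_cases u
    · exact ⟨fun _ => (tz_sign _ (by norm_num) 1 0 (by decide) (by decide)).1 (by norm_num),
        fun h => absurd h (by decide)⟩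
    · exact ⟨fun _ => (tz_sign _ (by norm_num) 4 1 (by decide) (by decide)).1 (by norm_num),
        fun h => absurd h (by decide)⟩
    · exact ⟨fun _ => (tz_sign _ (by norm_num) 6 4 (by decide) (by decide)).1 (by norm_num),
        fun h => absurd h (by decide)⟩
    · exact ⟨fun h => absurd h (by decide),
        fun _ => (tz_sign _ (by norm_num) 4 6 (by decide) (by decide)).2 (by norm_num)⟩
    · exact ⟨fun h => absurd h (by decide),
        fun _ => (tz_sign _ (by norm_num) 1 4 (by decide) (by decide)).2 (by norm_num)⟩
    · exact ⟨fun h => absurd h (by decide),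
        fun _ => (tz_sign _ (by norm_num) 0 1 (by decide) (by decide)).2 (by norm_num)⟩
  -- from a vanishing nonnegative bilinear sum, extract vanishing products
  have key : ∀ (E : Matrix (Fin 5 → Fin 2) (Fin 5 → Fin 2) ℝ), (∀ x y, 0 ≤ E x y) →
      (∑ u : Fin 6, ∑ u' : Fin 6, a 0 u * a 1 u' *
        (∑ x, ∑ y, dr (u:ℕ) x * (E x y * dr (u':ℕ) y))) = 0 →
      ∀ u u' : Fin 6, 0 < (∑ x, ∑ y, dr (u:ℕ) x * (E x y * dr (u':ℕ) y)) →
      a 0 u * a 1 u' = 0 := by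
    intro E hE h0 u u' hT
    have hnn : ∀ (w w' : Fin 6), 0 ≤ a 0 w * a 1 w' *
        (∑ x, ∑ y, dr (w:ℕ) x * (E x y * dr (w':ℕ) y)) :=
      fun w w' => mul_nonneg (mul_nonneg (ha 0 w) (ha 1 w')) (T_nonneg E hE _ _)
    have h1 := (Finset.sum_eq_zero_iff_of_nonneg
      (fun w _ => Finset.sum_nonneg fun w' _ => hnn w w')).mp h0 u (Finset.mem_univ u)
    have h2 := (Finset.sum_eq_zero_iff_of_nonneg
      (fun w' _ => hnn u w')).mp h1 u' (Finset.mem_univ u')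
    rcases mul_eq_zero.mp h2 with h | h
    · exact h
    · exact absurd h (ne_of_gt hT)
  -- products vanish for all close pairs
  have hprod : ∀ u u' : Fin 6, (u:ℕ) ≤ (u':ℕ)+2 → (u':ℕ) ≤ (u:ℕ)+2 → a 0 u * a 1 u' = 0 := by
    intro u u' h1 h2
    fin_cases u <;> fin_cases u' <;>
      first
      | exact absurd h1 (by decide)
      | exact absurd h2 (by decide)
      | exact key _ hEInn hsumI _ _ (T_pos _ hEInn _ _ (by decide) (by decide)
          ![0,0,0,0,0] ![0,0,0,0,0] (by decide) (by decide)
          (by rw [Matrix.one_apply_eq]; norm_num))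
      | exact key _ hEInn hsumI _ _ (T_pos _ hEInn _ _ (by decide) (by decide)
          ![0,0,0,0,1] ![0,0,0,0,1] (by decide) (by decide)
          (by rw [Matrix.one_apply_eq]; norm_num))
      | exact key _ hEInn hsumI _ _ (T_pos _ hEInn _ _ (by decide) (by decide)
          ![0,0,0,1,1] ![0,0,0,1,1] (by decide) (by decide)
          (by rw [Matrix.one_apply_eq]; norm_num))
      | exact key _ hEInn hsumI _ _ (T_pos _ hEInn _ _ (by decide) (by decide)
          ![0,0,1,1,1] ![0,0,1,1,1] (by decide) (by decide)
          (by rw [Matrix.one_apply_eq]; norm_num))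
      | exact key _ hEInn hsumI _ _ (T_pos _ hEInn _ _ (by decide) (by decide)
          ![0,1,1,1,1] ![0,1,1,1,1] (by decide) (by decide)
          (by rw [Matrix.one_apply_eq]; norm_num))
      | exact key _ hEInn hsumI _ _ (T_pos _ hEInn _ _ (by decide) (by decide)
          ![1,1,1,1,1] ![1,1,1,1,1] (by decide) (by decide)
          (by rw [Matrix.one_apply_eq]; norm_num))
      | exact key _ hEXnn hsumX _ _ (T_pos _ hEXnn _ _ (by decide) (by decide)
          ![0,0,0,0,0] ![1,0,0,0,0] (by decide) (by decide)
          (by norm_num +decide [PauliR, pr, Fin.prod_univ_five, Matrix.one_apply]))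
      | exact key _ hEXnn hsumX _ _ (T_pos _ hEXnn _ _ (by decide) (by decide)
          ![1,0,0,0,0] ![0,0,0,0,0] (by decide) (by decide)
          (by norm_num +decide [PauliR, pr, Fin.prod_univ_five, Matrix.one_apply]))
      | exact key _ hEXnn hsumX _ _ (T_pos _ hEXnn _ _ (by decide) (by decide)
          ![0,0,0,0,1] ![1,0,0,0,1] (by decide) (by decide)
          (by norm_num +decide [PauliR, pr, Fin.prod_univ_five, Matrix.one_apply]))
      | exact key _ hEXnn hsumX _ _ (T_pos _ hEXnn _ _ (by decide) (by decide)
          ![1,0,0,0,1] ![0,0,0,0,1] (by decide) (by decide)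
          (by norm_num +decide [PauliR, pr, Fin.prod_univ_five, Matrix.one_apply]))
      | exact key _ hEXnn hsumX _ _ (T_pos _ hEXnn _ _ (by decide) (by decide)
          ![0,0,0,1,1] ![1,0,0,1,1] (by decide) (by decide)
          (by norm_num +decide [PauliR, pr, Fin.prod_univ_five, Matrix.one_apply]))
      | exact key _ hEXnn hsumX _ _ (T_pos _ hEXnn _ _ (by decide) (by decide)
          ![1,0,0,1,1] ![0,0,0,1,1] (by decide) (by decide)
          (by norm_num +decide [PauliR, pr, Fin.prod_univ_five, Matrix.one_apply]))
      | exact key _ hEXnn hsumX _ _ (T_pos _ hEXnn _ _ (by decide) (by decide)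
          ![0,0,1,1,1] ![1,0,1,1,1] (by decide) (by decide)
          (by norm_num +decide [PauliR, pr, Fin.prod_univ_five, Matrix.one_apply]))
      | exact key _ hEXnn hsumX _ _ (T_pos _ hEXnn _ _ (by decide) (by decide)
          ![1,0,1,1,1] ![0,0,1,1,1] (by decide) (by decide)
          (by norm_num +decide [PauliR, pr, Fin.prod_univ_five, Matrix.one_apply]))
      | exact key _ hEXnn hsumX _ _ (T_pos _ hEXnn _ _ (by decide) (by decide)
          ![0,1,1,1,1] ![1,1,1,1,1] (by decide) (by decide)
          (by norm_num +decide [PauliR, pr, Fin.prod_univ_five, Matrix.one_apply]))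
      | exact key _ hEXnn hsumX _ _ (T_pos _ hEXnn _ _ (by decide) (by decide)
          ![1,1,1,1,1] ![0,1,1,1,1] (by decide) (by decide)
          (by norm_num +decide [PauliR, pr, Fin.prod_univ_five, Matrix.one_apply]))
      | exact key _ hEXXnn hsumXX _ _ (T_pos _ hEXXnn _ _ (by decide) (by decide)
          ![0,0,0,0,0] ![1,1,0,0,0] (by decide) (by decide)
          (by norm_num +decide [PauliR, pr, Fin.prod_univ_five, Matrix.one_apply]))
      | exact key _ hEXXnn hsumXX _ _ (T_pos _ hEXXnn _ _ (by decide) (by decide)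
          ![1,1,0,0,0] ![0,0,0,0,0] (by decide) (by decide)
          (by norm_num +decide [PauliR, pr, Fin.prod_univ_five, Matrix.one_apply]))
      | exact key _ hEXXnn hsumXX _ _ (T_pos _ hEXXnn _ _ (by decide) (by decide)
          ![0,0,0,0,1] ![1,1,0,0,1] (by decide) (by decide)
          (by norm_num +decide [PauliR, pr, Fin.prod_univ_five, Matrix.one_apply]))
      | exact key _ hEXXnn hsumXX _ _ (T_pos _ hEXXnn _ _ (by decide) (by decide)
          ![1,1,0,0,1] ![0,0,0,0,1] (by decide) (by decide)
          (by norm_num +decide [PauliR, pr, Fin.prod_univ_five, Matrix.one_apply]))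
      | exact key _ hEXXnn hsumXX _ _ (T_pos _ hEXXnn _ _ (by decide) (by decide)
          ![0,0,0,1,1] ![1,1,0,1,1] (by decide) (by decide)
          (by norm_num +decide [PauliR, pr, Fin.prod_univ_five, Matrix.one_apply]))
      | exact key _ hEXXnn hsumXX _ _ (T_pos _ hEXXnn _ _ (by decide) (by decide)
          ![1,1,0,1,1] ![0,0,0,1,1] (by decide) (by decide)
          (by norm_num +decide [PauliR, pr, Fin.prod_univ_five, Matrix.one_apply]))
      | exact key _ hEXXnn hsumXX _ _ (T_pos _ hEXXnn _ _ (by decide) (by decide)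
          ![0,0,1,1,1] ![1,1,1,1,1] (by decide) (by decide)
          (by norm_num +decide [PauliR, pr, Fin.prod_univ_five, Matrix.one_apply]))
      | exact key _ hEXXnn hsumXX _ _ (T_pos _ hEXXnn _ _ (by decide) (by decide)
          ![1,1,1,1,1] ![0,0,1,1,1] (by decide) (by decide)
          (by norm_num +decide [PauliR, pr, Fin.prod_univ_five, Matrix.one_apply]))
  -- the coefficient vectors are nonzero
  have hane : ∀ j : Fin 2, ∃ u : Fin 6, a j u ≠ 0 := by
    intro j
    by_contra h
    push_neg at h
    have h1 := horthR j j
    rw [if_pos rfl] at h1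
    have h2 : (∑ v, (∑ u : Fin 6, a j u * dr (u:ℕ) v) *
        (∑ u : Fin 6, a j u * dr (u:ℕ) v)) = 0 := by
      simp [h]
    rw [h2] at h1
    norm_num at h1
  obtain ⟨u₀, hu₀⟩ := hane 0
  obtain ⟨u₁, hu₁⟩ := hane 1
  have hsep : (u₁:ℕ) + 3 ≤ (u₀:ℕ) ∨ (u₀:ℕ) + 3 ≤ (u₁:ℕ) := by
    by_contra h
    push_neg at h
    exact mul_ne_zero hu₀ hu₁ (hprod u₀ u₁ (by omega) (by omega))
  rcases hsep with h | h
  · exact endgame1 (a 0) (a 1) _ hprod htz hZsum u₀ u₁ hu₀ hu₁ h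
  · exact endgame1 (a 1) (a 0) _
      (fun u u' h1 h2 => by rw [mul_comm]; exact hprod u' u h2 h1)
      htz hZsum.symm u₁ u₀ hu₁ hu₀ h
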